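/- arXiv:1809.07233 — 2 statements merged into one kernel-verified Lean document; each statement's English description precedes it below -/
import Mathlib

section
/- Let p > q ≥ 1 be coprime integers. Let (e_1, …, e_k) be a list of integers with each e_i ≥ 2 whose Hirzebruch–Jung continued fraction value equals p/q, and let (e'_1, …, e'_{k'}) be a list of integers with each e'_j ≥ 2 whose Hirzebruch–Jung continued fraction value equals p/(p−q). Then ∑_{i=1}^{k} (e_i − 1) = ∑_{j=1}^{k'} (e'_j − 1). -/
/-!
Put `x = p/q` and `x' = p/(p-q)`, so that `x⁻¹ + x'⁻¹ = 1`, a relation symmetric in the two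
expansions. For entries `≥ 2` one has `e - 1 < [e, e_2, …] ≤ e`, so the value pins down the head.
If `x = 2` both expansions are `[2]`. Otherwise, by symmetry, `x > 2`: then `x' < 2` forces
`E' = 2 :: T'`, while lowering the head of `E` by one expands `x - 1`, and
`(x - 1)⁻¹ + [T']⁻¹ = 1` again. Both sums `∑ (e_i - 1)` drop by exactly one, and induction on the
total length concludes.
-/

/-- The Hirzebruch–Jung continued fraction `[e_1, …, e_k] = e_1 − 1/[e_2, …, e_k]`,
with `[e_k] = e_k` (junk value `1` on the empty list). -/
def hjcf : List ℚ → ℚ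
  | [] => 1
  | [e] => e
  | e :: f :: rest => e - 1 / hjcf (f :: rest)

open Set

lemma hjcf_cons_of_ne_nil (a : ℚ) {L : List ℚ} (hL : L ≠ []) :
    hjcf (a :: L) = a - 1 / hjcf L := by
  obtain ⟨b, L, rfl⟩ := List.exists_cons_of_ne_nil hL
  rfl

lemma hjcf_cons_sub_one (a : ℚ) (L : List ℚ) : hjcf ((a - 1) :: L) = hjcf (a :: L) - 1 := by
  cases L with
  | nil => rfl
  | cons b L => simp only [hjcf]; ring

lemma hjcf_cons_mem_Ioo (a : ℚ) {L : List ℚ} (hL : L ≠ []) (h : 1 < hjcf L) :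
    hjcf (a :: L) ∈ Ioo (a - 1) a := by
  rw [hjcf_cons_of_ne_nil a hL]
  have : 0 < 1 / hjcf L := by positivity
  have : 1 / hjcf L < 1 := (div_lt_one (by positivity)).2 h
  constructor <;> linarith

lemma one_lt_hjcf {L : List ℚ} (hL : L ≠ []) (h2 : ∀ x ∈ L, 2 ≤ x) : 1 < hjcf L := by
  induction L with
  | nil => exact absurd rfl hL
  | cons a L ih =>
    rw [List.forall_mem_cons] at h2
    rcases eq_or_ne L [] with rfl | hL'
    · show 1 < a
      linarith [h2.1]
    · linarith [(hjcf_cons_mem_Ioo a hL' (ih hL' h2.2)).1, h2.1]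

lemma hjcf_cons_le (a : ℚ) {L : List ℚ} (h2 : ∀ x ∈ L, 2 ≤ x) : hjcf (a :: L) ≤ a := by
  rcases eq_or_ne L [] with rfl | hL
  · exact le_rfl
  · exact (hjcf_cons_mem_Ioo a hL (one_lt_hjcf hL h2)).2.le

lemma inv_hjcf_cons_sub_one_add_inv_hjcf_eq_one {a : ℚ} {L L' : List ℚ} (hL' : L' ≠ [])
    (ha : 1 < hjcf (a :: L)) (hL'1 : 1 < hjcf L')
    (h : (hjcf (a :: L))⁻¹ + (hjcf (2 :: L'))⁻¹ = 1) :
    (hjcf ((a - 1) :: L))⁻¹ + (hjcf L')⁻¹ = 1 := by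
  rw [hjcf_cons_of_ne_nil 2 hL'] at h
  rw [hjcf_cons_sub_one]
  set x := hjcf (a :: L)
  set y := hjcf L'
  have hy : 2 * y - 1 ≠ 0 := by linarith
  have hx : x - 1 ≠ 0 := by linarith
  field_simp at h ⊢
  linear_combination h

lemma lt_two_iff_two_lt_of_inv_add_inv_eq_one {K : Type*} [Field K] [LinearOrder K]
    [IsStrictOrderedRing K] {x y : K} (hx : 0 < x) (hy : 0 < y) (h : x⁻¹ + y⁻¹ = 1) :
    x < 2 ↔ 2 < y := by
  rw [← inv_lt_inv₀ two_pos hx, ← inv_lt_inv₀ hy two_pos]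
  constructor <;> intro <;> linarith

lemma two_le_of_mem_map_intCast {E : List ℤ} (hE : ∀ x ∈ E, 2 ≤ x) :
    ∀ x ∈ E.map (fun x : ℤ => (x : ℚ)), 2 ≤ x := by
  simpa using fun x hx => (Int.cast_le (R := ℚ)).2 (hE x hx)

lemma hjcf_map_intCast_cons_mem_Ioo (e : ℤ) {T : List ℤ} (hT : T ≠ []) (hE : ∀ x ∈ T, 2 ≤ x) :
    hjcf ((e :: T).map (fun x : ℤ => (x : ℚ))) ∈ Ioo ((e : ℚ) - 1) e :=
  hjcf_cons_mem_Ioo _ (by simpa using hT) (one_lt_hjcf (by simpa using hT)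
    (two_le_of_mem_map_intCast hE))

lemma eq_singleton_of_hjcf_eq_intCast {E : List ℤ} (hne : E ≠ []) (hE : ∀ x ∈ E, 2 ≤ x) {m : ℤ}
    (h : hjcf (E.map (fun x : ℤ => (x : ℚ))) = m) : E = [m] := by
  obtain ⟨e, T, rfl⟩ := List.exists_cons_of_ne_nil hne
  rcases eq_or_ne T [] with rfl | hT
  · exact congrArg (· :: []) (Int.cast_inj.1 h)
  · have := hjcf_map_intCast_cons_mem_Ioo e hT (List.forall_mem_cons.1 hE).2
    rw [h, mem_Ioo] at this
    have : e - 1 < m ∧ m < e := by exact_mod_cast this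
    omega

lemma head_eq_two_of_hjcf_lt_two {e : ℤ} {T : List ℤ} (hE : ∀ x ∈ e :: T, 2 ≤ x)
    (h : hjcf ((e :: T).map (fun x : ℤ => (x : ℚ))) < 2) : e = 2 ∧ T ≠ [] := by
  rw [List.forall_mem_cons] at hE
  rcases eq_or_ne T [] with rfl | hT
  · have : (2 : ℚ) ≤ e := by exact_mod_cast hE.1
    exact absurd h (not_lt.2 this)
  · have : e - 1 < 2 := by exact_mod_cast (hjcf_map_intCast_cons_mem_Ioo e hT hE.2).1.trans h
    exact ⟨by omega, hT⟩

theorem sum_sub_one_eq_of_inv_hjcf_add_inv_hjcf_eq_one {E E' : List ℤ} (hne : E ≠ [])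
    (hne' : E' ≠ []) (hE : ∀ x ∈ E, 2 ≤ x) (hE' : ∀ x ∈ E', 2 ≤ x)
    (h : (hjcf (E.map (fun x : ℤ => (x : ℚ))))⁻¹ + (hjcf (E'.map (fun x : ℤ => (x : ℚ))))⁻¹ = 1) :
    (E.map (· - 1)).sum = (E'.map (· - 1)).sum := by
  induction hn : E.length + E'.length using Nat.strong_induction_on generalizing E E' with
  | _ n ih =>
  have hx1 := one_lt_hjcf (by simpa using hne) (two_le_of_mem_map_intCast hE)
  have hx'1 := one_lt_hjcf (by simpa using hne') (two_le_of_mem_map_intCast hE')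
  wlog hx2 : 2 ≤ hjcf (E.map (fun x : ℤ => (x : ℚ))) generalizing E E'
  · refine (this hne' hne hE' hE (by rwa [add_comm]) (by omega) hx'1 hx1 ?_).symm
    exact ((lt_two_iff_two_lt_of_inv_add_inv_eq_one (by positivity) (by positivity) h).1
      (not_le.1 hx2)).le
  rcases hx2.eq_or_lt with hx2 | hx2
  · have hx'2 : hjcf (E'.map (fun x : ℤ => (x : ℚ))) = 2 := by
      rw [← hx2] at h
      exact inv_injective (by linarith)
    rw [eq_singleton_of_hjcf_eq_intCast hne hE (m := 2) (by rw [← hx2]; norm_num),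
      eq_singleton_of_hjcf_eq_intCast hne' hE' (m := 2) (by rw [hx'2]; norm_num)]
  obtain ⟨e, T, rfl⟩ := List.exists_cons_of_ne_nil hne
  obtain ⟨e', T', rfl⟩ := List.exists_cons_of_ne_nil hne'
  obtain ⟨rfl, hT'⟩ := head_eq_two_of_hjcf_lt_two hE' <|
    (lt_two_iff_two_lt_of_inv_add_inv_eq_one (by positivity) (by positivity)
      (by rwa [add_comm])).2 hx2
  rw [List.forall_mem_cons] at hE hE'
  have he : 3 ≤ e := by
    have := hx2.trans_le (hjcf_cons_le (e : ℚ) (two_le_of_mem_map_intCast hE.2))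
    exact_mod_cast this
  have hE₁ : ∀ x ∈ (e - 1) :: T, 2 ≤ x := List.forall_mem_cons.2 ⟨by omega, hE.2⟩
  have hT'ne : T'.map (fun x : ℤ => (x : ℚ)) ≠ [] := by simpa using hT'
  have hdual : (hjcf (((e - 1) :: T).map (fun x : ℤ => (x : ℚ))))⁻¹
      + (hjcf (T'.map (fun x : ℤ => (x : ℚ))))⁻¹ = 1 := by
    have := inv_hjcf_cons_sub_one_add_inv_hjcf_eq_one hT'ne hx1
      (one_lt_hjcf hT'ne (two_le_of_mem_map_intCast hE'.2)) (by simpa using h)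
    simpa using this
  have key := ih _ (by simp only [List.length_cons] at hn ⊢; omega) (List.cons_ne_nil _ _) hT' hE₁ hE'.2 hdual rfl
  simp only [List.map_cons, List.sum_cons] at key ⊢
  omega

theorem riemenschneider_sum_eq_general (p q : ℤ) (hq1 : 1 ≤ q) (hqp : q < p)
    (E E' : List ℤ) (hne : E ≠ []) (hne' : E' ≠ [])
    (hE : ∀ x ∈ E, 2 ≤ x) (hE' : ∀ x ∈ E', 2 ≤ x)
    (hval : hjcf (E.map (fun x : ℤ => (x : ℚ))) = (p : ℚ) / (q : ℚ))
    (hval' : hjcf (E'.map (fun x : ℤ => (x : ℚ))) = (p : ℚ) / ((p : ℚ) - (q : ℚ))) :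
    (E.map (fun x => x - 1)).sum = (E'.map (fun x => x - 1)).sum := by
  have hp : (p : ℚ) ≠ 0 := by exact_mod_cast (show p ≠ 0 by omega)
  refine sum_sub_one_eq_of_inv_hjcf_add_inv_hjcf_eq_one hne hne' hE hE' ?_
  rw [hval, hval', inv_div, inv_div, ← add_div, add_sub_cancel, div_self hp]

/-- Riemenschneider: if `[e_1,…,e_k] = p/q` and
`[e'_1,…,e'_{k'}] = p/(p−q)` are the Hirzebruch–Jung expansions of the dual
fractions, then `∑ (e_i − 1) = ∑ (e'_j − 1)`. -/
theorem riemenschneider_sum_eq (p q : ℤ) (hq1 : 1 ≤ q) (hqp : q < p)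
    (hcop : IsCoprime p q)
    (E E' : List ℤ) (hne : E ≠ []) (hne' : E' ≠ [])
    (hE : ∀ x ∈ E, 2 ≤ x) (hE' : ∀ x ∈ E', 2 ≤ x)
    (hval : hjcf (E.map (fun x : ℤ => (x : ℚ))) = (p : ℚ) / (q : ℚ))
    (hval' : hjcf (E'.map (fun x : ℤ => (x : ℚ))) = (p : ℚ) / ((p : ℚ) - (q : ℚ))) :
    (E.map (fun x => x - 1)).sum = (E'.map (fun x => x - 1)).sum :=
  riemenschneider_sum_eq_general p q hq1 hqp E E' hne hne' hE hE' hval hval'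
end

section
/- Let p > q ≥ 1 be coprime integers. Let (e_1, …, e_k) be a list of integers with each e_i ≥ 2 whose Hirzebruch–Jung continued fraction value equals p/q, and let (e'_1, …, e'_{k'}) be a list of integers with each e'_j ≥ 2 whose Hirzebruch–Jung continued fraction value equals p/(p−q). Then ∑_{i=1}^{k} (e_i − 1) = k + k' − 1; equivalently, setting the embedding dimension e = k' + 2, one has ∑_{i=1}^{k}(e_i − 1) = e + k − 3. -/
/-!
With `x = p/q` and `x' = p/(p-q)` one has `1/x + 1/x' = 1`, a relation symmetric in the two
expansions. If `x < 2` then `e_1 = 2`, and removing it while lowering `e'_1` by one gives a dual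
pair of smaller total length whose value of `∑ (e_i - 1) - k - k'` is unchanged; the case
`x > 2` is the mirror image, and `x = 2` only occurs for the pair `[2]`, `[2]`.
-/

def hjVal (E : List ℤ) : ℚ := hjcf (E.map (fun x : ℤ => (x : ℚ)))

@[simp]
lemma hjVal_singleton (e : ℤ) : hjVal [e] = e := rfl

lemma hjVal_cons {t : List ℤ} (ht : t ≠ []) (e : ℤ) : hjVal (e :: t) = e - (hjVal t)⁻¹ := by
  obtain ⟨f, r, rfl⟩ := List.exists_cons_of_ne_nil ht
  exact congrArg (_ - ·) (one_div _)

lemma hjVal_cons_sub_one (e : ℤ) (t : List ℤ) : hjVal ((e - 1) :: t) = hjVal (e :: t) - 1 := by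
  rcases eq_or_ne t [] with rfl | ht
  · simp
  · rw [hjVal_cons ht, hjVal_cons ht]
    push_cast
    ring

lemma one_lt_hjVal : ∀ {E : List ℤ}, E ≠ [] → (∀ x ∈ E, 2 ≤ x) → 1 < hjVal E
  | [e], _, h => by
    have : (2 : ℚ) ≤ e := by exact_mod_cast h e List.mem_cons_self
    simp only [hjVal_singleton]
    linarith
  | e :: f :: r, _, h => by
    have ih : 1 < hjVal (f :: r) :=
      one_lt_hjVal (List.cons_ne_nil _ _) fun x hx => h x (List.mem_cons_of_mem _ hx)
    have he : (2 : ℚ) ≤ e := by exact_mod_cast h e List.mem_cons_self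
    rw [hjVal_cons (List.cons_ne_nil _ _)]
    linarith [inv_lt_one_of_one_lt₀ ih]

lemma sub_one_lt_hjVal_cons (e : ℤ) {t : List ℤ} (ht : ∀ x ∈ t, 2 ≤ x) :
    (e : ℚ) - 1 < hjVal (e :: t) := by
  rcases eq_or_ne t [] with rfl | hne
  · simp
  · rw [hjVal_cons hne]
    linarith [inv_lt_one_of_one_lt₀ (one_lt_hjVal hne ht)]

lemma hjVal_cons_lt (e : ℤ) {t : List ℤ} (hne : t ≠ []) (ht : ∀ x ∈ t, 2 ≤ x) :
    hjVal (e :: t) < e := by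
  have := one_lt_hjVal hne ht
  rw [hjVal_cons hne]
  linarith [inv_pos.mpr (zero_lt_one.trans this)]

lemma hjVal_cons_le (e : ℤ) {t : List ℤ} (ht : ∀ x ∈ t, 2 ≤ x) : hjVal (e :: t) ≤ e := by
  rcases eq_or_ne t [] with rfl | hne
  · simp
  · exact (hjVal_cons_lt e hne ht).le

lemma head_eq_two_of_hjVal_le_two {e : ℤ} {t : List ℤ} (h : ∀ x ∈ e :: t, 2 ≤ x)
    (hle : hjVal (e :: t) ≤ 2) : e = 2 := by
  have hlower := sub_one_lt_hjVal_cons e fun x hx => h x (List.mem_cons_of_mem _ hx)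
  have he : e < 3 := by exact_mod_cast (show (e : ℚ) < 3 by linarith)
  exact le_antisymm (by omega) (h e List.mem_cons_self)

lemma head_eq_two_of_hjVal_lt_two {e : ℤ} {t : List ℤ} (h : ∀ x ∈ e :: t, 2 ≤ x)
    (hlt : hjVal (e :: t) < 2) : e = 2 ∧ t ≠ [] := by
  obtain rfl := head_eq_two_of_hjVal_le_two h hlt.le
  refine ⟨rfl, ?_⟩
  rintro rfl
  simp at hlt

lemma eq_two_of_hjVal_eq_two {e : ℤ} {t : List ℤ} (h : ∀ x ∈ e :: t, 2 ≤ x)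
    (heq : hjVal (e :: t) = 2) : e = 2 ∧ t = [] := by
  obtain rfl := head_eq_two_of_hjVal_le_two h heq.le
  refine ⟨rfl, ?_⟩
  by_contra hne
  have := hjVal_cons_lt 2 hne fun x hx => h x (List.mem_cons_of_mem _ hx)
  rw [heq] at this
  norm_num at this

/-- `E` and `E'` expand `x` and its dual `x / (x - 1)`, e.g. `p/q` and `p/(p-q)`. -/
structure IsDualPair (E E' : List ℤ) : Prop where
  ne_nil : E ≠ []
  ne_nil' : E' ≠ []
  two_le : ∀ x ∈ E, 2 ≤ x
  two_le' : ∀ x ∈ E', 2 ≤ x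
  inv_add_inv : (hjVal E)⁻¹ + (hjVal E')⁻¹ = 1

namespace IsDualPair

section

variable {E E' : List ℤ}

lemma symm (h : IsDualPair E E') : IsDualPair E' E :=
  ⟨h.ne_nil', h.ne_nil, h.two_le', h.two_le, by rw [add_comm]; exact h.inv_add_inv⟩

lemma hjVal_lt_two_iff (h : IsDualPair E E') : hjVal E < 2 ↔ 2 < hjVal E' := by
  have hx := zero_lt_one.trans (one_lt_hjVal h.ne_nil h.two_le)
  have hx' := zero_lt_one.trans (one_lt_hjVal h.ne_nil' h.two_le')
  rw [← inv_lt_inv₀ two_pos hx, ← inv_lt_inv₀ hx' two_pos]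
  constructor <;> intro <;> linarith [h.inv_add_inv]

lemma hjVal_eq_two (h : IsDualPair E E') (heq : hjVal E = 2) : hjVal E' = 2 := by
  have := h.inv_add_inv
  rw [heq] at this
  exact inv_injective (by linarith)

lemma of_two_cons {t t' : List ℤ} {e' : ℤ} (h : IsDualPair (2 :: t) (e' :: t')) (ht : t ≠ []) :
    IsDualPair t ((e' - 1) :: t') where
  ne_nil := ht
  ne_nil' := List.cons_ne_nil _ _
  two_le x hx := h.two_le x (List.mem_cons_of_mem _ hx)
  two_le' := by
    have htail : ∀ x ∈ t, 2 ≤ x := fun x hx => h.two_le x (List.mem_cons_of_mem _ hx)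
    have htail' : ∀ x ∈ t', 2 ≤ x := fun x hx => h.two_le' x (List.mem_cons_of_mem _ hx)
    have hgt : 2 < hjVal (e' :: t') :=
      h.hjVal_lt_two_iff.mp (by exact_mod_cast hjVal_cons_lt 2 ht htail)
    have he' : 2 < e' := by exact_mod_cast hgt.trans_le (hjVal_cons_le e' htail')
    rintro x (_ | ⟨_, hx⟩)
    · omega
    · exact htail' x hx
  inv_add_inv := by
    have hy := one_lt_hjVal ht fun x hx => h.two_le x (List.mem_cons_of_mem _ hx)
    have ha : (hjVal t)⁻¹ < 1 := inv_lt_one_of_one_lt₀ hy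
    set a := (hjVal t)⁻¹
    have hrel : (hjVal (e' :: t'))⁻¹ = 1 - (2 - a)⁻¹ := by
      have := h.inv_add_inv
      rw [hjVal_cons ht] at this
      push_cast at this
      linarith
    have hz : hjVal (e' :: t') = (2 - a) / (1 - a) := by
      rw [← inv_inv (hjVal _), hrel]
      have : 2 - a ≠ 0 := by linarith
      field_simp
      ring
    rw [hjVal_cons_sub_one, hz]
    have : 1 - a ≠ 0 := by linarith
    field_simp
    ring

end

theorem sum_map_sub_one {E E' : List ℤ} (h : IsDualPair E E') :
    (E.map (· - 1)).sum = (E.length : ℤ) + E'.length - 1 := by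
  obtain ⟨e, t, rfl⟩ := List.exists_cons_of_ne_nil h.ne_nil
  obtain ⟨e', t', rfl⟩ := List.exists_cons_of_ne_nil h.ne_nil'
  rcases lt_trichotomy (hjVal (e :: t)) 2 with hlt | heq | hgt
  · obtain ⟨rfl, ht⟩ := head_eq_two_of_hjVal_lt_two h.two_le hlt
    have := IsDualPair.sum_map_sub_one (h.of_two_cons ht)
    simp only [List.map_cons, List.sum_cons, List.length_cons] at this ⊢
    omega
  · obtain ⟨rfl, rfl⟩ := eq_two_of_hjVal_eq_two h.two_le heq
    obtain ⟨rfl, rfl⟩ := eq_two_of_hjVal_eq_two h.two_le' (h.hjVal_eq_two heq)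
    simp
  · obtain ⟨rfl, ht'⟩ := head_eq_two_of_hjVal_lt_two h.two_le' (h.symm.hjVal_lt_two_iff.mpr hgt)
    have := IsDualPair.sum_map_sub_one (h.symm.of_two_cons ht').symm
    simp only [List.map_cons, List.sum_cons, List.length_cons] at this ⊢
    omega
termination_by E.length + E'.length

end IsDualPair

theorem riemenschneider_sum_length_general (p q : ℤ)
    (E E' : List ℤ) (hne : E ≠ []) (hne' : E' ≠ [])
    (hE : ∀ x ∈ E, 2 ≤ x) (hE' : ∀ x ∈ E', 2 ≤ x)
    (hval : hjcf (E.map (fun x : ℤ => (x : ℚ))) = (p : ℚ) / (q : ℚ))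
    (hval' : hjcf (E'.map (fun x : ℤ => (x : ℚ))) = (p : ℚ) / ((p : ℚ) - (q : ℚ))) :
    (E.map (fun x => x - 1)).sum = (E.length : ℤ) + (E'.length : ℤ) - 1 ∧
      (E.map (fun x => x - 1)).sum = ((E'.length : ℤ) + 2) + (E.length : ℤ) - 3 := by
  have hp : (p : ℚ) ≠ 0 := by
    intro hp0
    have := one_lt_hjVal hne hE
    rw [hjVal, hval, hp0, zero_div] at this
    norm_num at this
  have hdual : IsDualPair E E' := ⟨hne, hne', hE, hE', by
    rw [hjVal, hjVal, hval, hval', inv_div, inv_div]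
    field_simp
    ring⟩
  have hsum := hdual.sum_map_sub_one
  exact ⟨hsum, by rw [hsum]; ring⟩

/-- if `[e_1,…,e_k] = p/q` and `[e'_1,…,e'_{k'}] = p/(p−q)` are the
dual Hirzebruch–Jung expansions, then `∑ (e_i − 1) = k + k' − 1`; equivalently,
with the embedding dimension `e = k' + 2`, one has `∑ (e_i − 1) = e + k − 3`. -/
theorem riemenschneider_sum_length (p q : ℤ) (hq1 : 1 ≤ q) (hqp : q < p)
    (hcop : IsCoprime p q)
    (E E' : List ℤ) (hne : E ≠ []) (hne' : E' ≠ [])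
    (hE : ∀ x ∈ E, 2 ≤ x) (hE' : ∀ x ∈ E', 2 ≤ x)
    (hval : hjcf (E.map (fun x : ℤ => (x : ℚ))) = (p : ℚ) / (q : ℚ))
    (hval' : hjcf (E'.map (fun x : ℤ => (x : ℚ))) = (p : ℚ) / ((p : ℚ) - (q : ℚ))) :
    (E.map (fun x => x - 1)).sum = (E.length : ℤ) + (E'.length : ℤ) - 1 ∧
      (E.map (fun x => x - 1)).sum = ((E'.length : ℤ) + 2) + (E.length : ℤ) - 3 :=
  riemenschneider_sum_length_general p q E E' hne hne' hE hE' hval hval'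
end
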